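/- Let z : ℤ² → ℂ be a polygon recutting lattice map: for all (i,j), z_{i+1,j+1} is the reflection of z_{i,j} about the perpendicular bisector of the segment [z_{i+1,j}, z_{i,j+1}] (all four points pairwise distinct). Then |z_{i,j} - z_{i+1,j}| is independent of j, |z_{i,j} - z_{i,j+1}| is independent of i, and cr(z_{i,j}, z_{i+1,j}, z_{i+1,j+1}, z_{i,j+1}) = ℓ_i² / m_j² where ℓ_i = |z_{i,0} - z_{i+1,0}| (evaluated at j with the invariance) and m_j = |z_{0,j} - z_{0,j+1}|. In particular z is an integrable cross-ratio map with real positive edge-labels given by squared edge lengths. -/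

import Mathlib

/-!
Let `R` be the reflection across the perpendicular bisector of `[u, v]`. Since `R` is
antiholomorphic and swaps `u` and `v`, `R w - v = k · conj (u - w)` and
`R w - u = k · conj (v - w)` with `|k| = 1`. So each elementary quad has equal opposite edge
lengths, which propagates along rows and columns; substituting the same two formulas into the
cross-ratio, the factor `k` cancels and `|w - u|² / |v - w|²` remains.
-/
/-- The cross-ratio of four complex numbers. -/
noncomputable def cr (a b c d : ℂ) : ℂ := ((a - b) * (c - d)) / ((b - c) * (d - a))

/-- Reflection of `w` across the perpendicular bisector of the segment `[u, v]`. -/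
noncomputable def perpBisectorReflect (u v w : ℂ) : ℂ :=
  (u + v) / 2 - ((v - u) / (starRingEnd ℂ) (v - u)) * (starRingEnd ℂ) (w - (u + v) / 2)

open ComplexConjugate

section PerpBisectorReflect

variable {u v : ℂ}

lemma perpBisectorReflect_sub_right (huv : u ≠ v) (w : ℂ) :
    perpBisectorReflect u v w - v = (v - u) / conj (v - u) * conj (u - w) := by
  have : conj (v - u) ≠ 0 := (map_ne_zero _).mpr (sub_ne_zero.mpr huv.symm)
  unfold perpBisectorReflect
  simp only [map_sub, map_add, map_div₀, map_ofNat] at this ⊢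
  field_simp
  ring

lemma perpBisectorReflect_sub_left (huv : u ≠ v) (w : ℂ) :
    perpBisectorReflect u v w - u = (v - u) / conj (v - u) * conj (v - w) := by
  have : conj (v - u) ≠ 0 := (map_ne_zero _).mpr (sub_ne_zero.mpr huv.symm)
  unfold perpBisectorReflect
  simp only [map_sub, map_add, map_div₀, map_ofNat] at this ⊢
  field_simp
  ring

lemma norm_div_conj_mul_conj (huv : u ≠ v) (x : ℂ) :
    ‖(v - u) / conj (v - u) * conj x‖ = ‖x‖ := by
  rw [norm_mul, norm_div, Complex.norm_conj, Complex.norm_conj,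
    div_self (norm_ne_zero_iff.mpr (sub_ne_zero.mpr huv.symm)), one_mul]

lemma norm_perpBisectorReflect_sub_right (huv : u ≠ v) (w : ℂ) :
    ‖perpBisectorReflect u v w - v‖ = ‖u - w‖ := by
  rw [perpBisectorReflect_sub_right huv, norm_div_conj_mul_conj huv]

lemma norm_perpBisectorReflect_sub_left (huv : u ≠ v) (w : ℂ) :
    ‖perpBisectorReflect u v w - u‖ = ‖v - w‖ := by
  rw [perpBisectorReflect_sub_left huv, norm_div_conj_mul_conj huv]

lemma cr_perpBisectorReflect {b d : ℂ} (hbd : b ≠ d) (a : ℂ) :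
    cr a b (perpBisectorReflect b d a) d = ((‖a - b‖ ^ 2 / ‖d - a‖ ^ 2 : ℝ) : ℂ) := by
  have hcd := perpBisectorReflect_sub_right hbd a
  have hbc : b - perpBisectorReflect b d a = -((d - b) / conj (d - b) * conj (d - a)) := by
    rw [← perpBisectorReflect_sub_left hbd a]; ring
  set k := (d - b) / conj (d - b)
  have hk : k ≠ 0 := div_ne_zero (sub_ne_zero.mpr hbd.symm)
    ((map_ne_zero _).mpr (sub_ne_zero.mpr hbd.symm))
  calc cr a b (perpBisectorReflect b d a) d
      = -k * ((a - b) * conj (a - b)) / (-k * ((d - a) * conj (d - a))) := by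
        unfold cr
        rw [hcd, hbc, ← neg_sub a b, map_neg]
        ring
    _ = (a - b) * conj (a - b) / ((d - a) * conj (d - a)) :=
        mul_div_mul_left _ _ (neg_ne_zero.mpr hk)
    _ = ((‖a - b‖ ^ 2 / ‖d - a‖ ^ 2 : ℝ) : ℂ) := by
        rw [Complex.mul_conj, Complex.mul_conj, Complex.normSq_eq_norm_sq,
          Complex.normSq_eq_norm_sq]
        push_cast
        ring

end PerpBisectorReflect

lemma Function.Periodic.eq_of_int {α : Type*} {f : ℤ → α} (hf : Function.Periodic f 1)
    (m n : ℤ) : f m = f n := by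
  simpa using (hf.int_mul_eq m).trans (hf.int_mul_eq n).symm

/-- In a polygon recutting lattice map, column edge lengths are independent of
the row, row edge lengths are independent of the column, and the cross-ratio of
each unit square equals the ratio of squared edge lengths `ℓ_i²/m_j²`; in
particular `z` is an integrable cross-ratio map with real positive edge-labels
given by squared edge lengths. -/
theorem recutting_is_integrable_cross_ratio_map (z : ℤ × ℤ → ℂ)
    (hdist : ∀ i j : ℤ,
      List.Pairwise (· ≠ ·) [z (i, j), z (i + 1, j), z (i + 1, j + 1), z (i, j + 1)])
    (hrefl : ∀ i j : ℤ,
      z (i + 1, j + 1) = perpBisectorReflect (z (i + 1, j)) (z (i, j + 1)) (z (i, j))) :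
    (∀ i j j' : ℤ,
      ‖z (i, j) - z (i + 1, j)‖ = ‖z (i, j') - z (i + 1, j')‖) ∧
    (∀ i i' j : ℤ,
      ‖z (i, j) - z (i, j + 1)‖ = ‖z (i', j) - z (i', j + 1)‖) ∧
    (∀ i j : ℤ,
      cr (z (i, j)) (z (i + 1, j)) (z (i + 1, j + 1)) (z (i, j + 1)) =
        (((‖z (i, 0) - z (i + 1, 0)‖) ^ 2
          / (‖z (0, j) - z (0, j + 1)‖) ^ 2 : ℝ) : ℂ)) := by
  have hdiag : ∀ i j, z (i + 1, j) ≠ z (i, j + 1) := fun i j => by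
    have := hdist i j
    simp only [List.pairwise_cons, List.mem_cons, List.not_mem_nil] at this
    exact this.2.1 _ (by simp)
  have hrow : ∀ i j j', ‖z (i, j) - z (i + 1, j)‖ = ‖z (i, j') - z (i + 1, j')‖ :=
    fun i => Function.Periodic.eq_of_int fun j => by
      rw [norm_sub_rev, hrefl, norm_perpBisectorReflect_sub_right (hdiag i j), norm_sub_rev]
  have hcol : ∀ i i' j, ‖z (i, j) - z (i, j + 1)‖ = ‖z (i', j) - z (i', j + 1)‖ :=
    fun i i' j => Function.Periodic.eq_of_int (f := fun i => ‖z (i, j) - z (i, j + 1)‖)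
      (fun i => by
        dsimp only
        rw [norm_sub_rev, hrefl, norm_perpBisectorReflect_sub_left (hdiag i j), norm_sub_rev])
      i i'
  refine ⟨hrow, hcol, fun i j => ?_⟩
  rw [hrefl, cr_perpBisectorReflect (hdiag i j), hrow i j 0, norm_sub_rev (z (i, j + 1)),
    hcol i 0 j]
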